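/- The function v(x,t) = 2x·Φ(−1/(xσ√(T−t))) is a strictly positive classical solution of v_t + (1/2)σ²x⁴v_{xx} = 0 on (0,∞)×(0,T) which converges to 0 as t → T⁻ for each fixed x > 0 and converges to 0 as x → 0⁺ for each fixed t < T. Hence the Black–Scholes equation with this volatility admits a nonzero solution with zero terminal and zero boundary data, and uniqueness of solutions of linear growth fails. -/

import Mathlib

/-!
Put `a = σ √(T - t)` and `V(a, x) = 2xΦ(-1/(xa))`, so that `v(x, t) = V(σ √(T - t), x)`.
Both `∂V/∂a` and `a x⁴ ∂²V/∂x²` equal `2φ(-1/(xa)) / a²`, and `da/dt = -σ² / (2a)`, hence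
`∂v/∂t = -σ²x⁴/2 · ∂²v/∂x²`. As `t → T⁻` we have `a → 0⁺`, so the argument of `Φ` tends to `-∞`;
as `x → 0⁺` the bound `0 < V ≤ 2x` forces `V → 0`.
-/

open Real Filter

/-- The standard normal cumulative distribution function. -/
noncomputable def stdNormalCDF (z : ℝ) : ℝ :=
  ∫ s in Set.Iic z, (2 * π) ^ (-(1:ℝ)/2) * exp (-s ^ 2 / 2)

open MeasureTheory ProbabilityTheory Topology

lemma gaussianPDFReal_zero_one (s : ℝ) :
    gaussianPDFReal 0 1 s = (2 * π) ^ (-(1:ℝ)/2) * exp (-s ^ 2 / 2) := by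
  rw [gaussianPDFReal, sqrt_eq_rpow, ← rpow_neg (by positivity)]
  norm_num

lemma continuous_gaussianPDFReal_zero_one : Continuous (gaussianPDFReal 0 1) := by
  rw [gaussianPDFReal_def]; fun_prop

lemma hasDerivAt_gaussianPDFReal_zero_one (z : ℝ) :
    HasDerivAt (gaussianPDFReal 0 1) (-z * gaussianPDFReal 0 1 z) z := by
  have hexponent : HasDerivAt (fun s : ℝ => -s ^ 2 / 2) (-z) z :=
    ((hasDerivAt_pow 2 z).neg.div_const 2).congr_deriv (by norm_num; ring)
  rw [funext gaussianPDFReal_zero_one]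
  exact (hexponent.exp.const_mul _).congr_deriv (by ring)

lemma stdNormalCDF_eq_integral (z : ℝ) :
    stdNormalCDF z = ∫ s in Set.Iic z, gaussianPDFReal 0 1 s := by
  simp only [stdNormalCDF, gaussianPDFReal_zero_one]

lemma stdNormalCDF_eq_cdf (z : ℝ) : stdNormalCDF z = cdf (gaussianReal 0 1) z := by
  rw [cdf_eq_real, measureReal_def, gaussianReal_apply_eq_integral _ one_ne_zero,
    ENNReal.toReal_ofReal (setIntegral_nonneg measurableSet_Iic
      fun s _ => gaussianPDFReal_nonneg 0 1 s), stdNormalCDF_eq_integral]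

lemma stdNormalCDF_pos (z : ℝ) : 0 < stdNormalCDF z := by
  rw [stdNormalCDF_eq_cdf, cdf_eq_real]
  refine ENNReal.toReal_pos (fun h => ?_) (measure_ne_top _ _)
  simpa using gaussianReal_absolutelyContinuous' 0 one_ne_zero h

lemma stdNormalCDF_le_one (z : ℝ) : stdNormalCDF z ≤ 1 :=
  stdNormalCDF_eq_cdf z ▸ cdf_le_one _ z

lemma tendsto_stdNormalCDF_atBot : Tendsto stdNormalCDF atBot (𝓝 0) := by
  simpa only [← funext stdNormalCDF_eq_cdf] using tendsto_cdf_atBot (gaussianReal 0 1)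

lemma hasDerivAt_stdNormalCDF (z : ℝ) : HasDerivAt stdNormalCDF (gaussianPDFReal 0 1 z) z := by
  have hint := integrable_gaussianPDFReal 0 1
  have hsplit : ∀ u, stdNormalCDF u = stdNormalCDF 0 + ∫ s in (0:ℝ)..u, gaussianPDFReal 0 1 s := by
    intro u
    rw [← intervalIntegral.integral_Iic_sub_Iic hint.integrableOn hint.integrableOn,
      ← stdNormalCDF_eq_integral, ← stdNormalCDF_eq_integral]
    ring
  rw [funext hsplit]
  exact (intervalIntegral.integral_hasDerivAt_right hint.intervalIntegrable
    (continuous_gaussianPDFReal_zero_one.stronglyMeasurableAtFilter _ _)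
    continuous_gaussianPDFReal_zero_one.continuousAt).const_add _

lemma hasDerivAt_neg_one_div_mul_const {c y : ℝ} (hc : c ≠ 0) (hy : y ≠ 0) :
    HasDerivAt (fun z => -(1 / (z * c))) (1 / (c * y ^ 2)) y := by
  have h := ((hasDerivAt_mul_const c).inv (mul_ne_zero hy hc)).neg
  simp only [one_div]
  exact h.congr_deriv (by field_simp)

/-- `v(x, t) = bubbleProfile (σ √(T - t)) x`. -/
noncomputable def bubbleProfile (a x : ℝ) : ℝ := 2 * x * stdNormalCDF (-(1 / (x * a)))

section
variable {a x : ℝ}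

lemma bubbleProfile_pos (hx : 0 < x) : 0 < bubbleProfile a x :=
  mul_pos (by positivity) (stdNormalCDF_pos _)

lemma abs_bubbleProfile_le : |bubbleProfile a x| ≤ 2 * |x| := by
  have h := stdNormalCDF_pos (-(1 / (x * a)))
  rw [bubbleProfile, abs_mul, abs_mul, abs_two, abs_of_pos h]
  exact mul_le_of_le_one_right (by positivity) (stdNormalCDF_le_one _)

lemma tendsto_bubbleProfile_nhds_zero : Tendsto (bubbleProfile a) (𝓝 0) (𝓝 0) := by
  refine squeeze_zero_norm (fun x => abs_bubbleProfile_le) ?_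
  simpa using (continuous_abs.tendsto (0:ℝ)).const_mul 2

lemma tendsto_bubbleProfile_scale_zero (hx : 0 < x) :
    Tendsto (fun b => bubbleProfile b x) (𝓝[>] 0) (𝓝 0) := by
  have hw : Tendsto (fun b => -(1 / (x * b))) (𝓝[>] 0) atBot := by
    simp only [one_div, mul_inv]
    exact tendsto_neg_atTop_atBot.comp (tendsto_inv_nhdsGT_zero.const_mul_atTop (inv_pos.2 hx))
  have h := (tendsto_stdNormalCDF_atBot.comp hw).const_mul (2 * x)
  rw [mul_zero] at h
  exact h

lemma hasDerivAt_bubbleProfile (hx : x ≠ 0) (ha : a ≠ 0) :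
    HasDerivAt (bubbleProfile a)
      (2 * stdNormalCDF (-(1 / (x * a))) + 2 * gaussianPDFReal 0 1 (-(1 / (x * a))) / (a * x))
      x := by
  have h := ((hasDerivAt_id x).const_mul 2).mul
    ((hasDerivAt_stdNormalCDF _).comp x (hasDerivAt_neg_one_div_mul_const ha hx))
  exact h.congr_deriv (by simp only [id, Function.comp_apply]; field_simp)

lemma hasDerivAt_deriv_bubbleProfile (hx : x ≠ 0) (ha : a ≠ 0) :
    HasDerivAt (deriv (bubbleProfile a))
      (2 * gaussianPDFReal 0 1 (-(1 / (x * a))) / (a ^ 3 * x ^ 4)) x := by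
  have hderiv : deriv (bubbleProfile a) =ᶠ[𝓝 x] fun y =>
      2 * stdNormalCDF (-(1 / (y * a))) + 2 * gaussianPDFReal 0 1 (-(1 / (y * a))) / (a * y) := by
    filter_upwards [isOpen_ne.mem_nhds hx] with y hy using (hasDerivAt_bubbleProfile hy ha).deriv
  have hw := hasDerivAt_neg_one_div_mul_const ha hx
  have h := (((hasDerivAt_stdNormalCDF _).comp x hw).const_mul 2).add
    ((((hasDerivAt_gaussianPDFReal_zero_one _).comp x hw).const_mul 2).div
      ((hasDerivAt_id x).const_mul a) (mul_ne_zero ha hx))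
  -- Only the `φ' = -zφ` term survives: the other two cancel.
  refine (h.congr_of_eventuallyEq hderiv).congr_deriv ?_
  simp only [id, Function.comp_apply]
  field_simp
  ring

lemma hasDerivAt_bubbleProfile_scale (hx : x ≠ 0) (ha : a ≠ 0) :
    HasDerivAt (fun b => bubbleProfile b x) (a * x ^ 4 * deriv (deriv (bubbleProfile a)) x) a := by
  have hw : HasDerivAt (fun b => -(1 / (x * b))) (1 / (x * a ^ 2)) a :=
    (hasDerivAt_neg_one_div_mul_const hx ha).congr_of_eventuallyEq
      (Eventually.of_forall fun b => by ring)
  have h := ((hasDerivAt_stdNormalCDF _).comp a hw).const_mul (2 * x)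
  rw [(hasDerivAt_deriv_bubbleProfile hx ha).deriv]
  exact h.congr_deriv (by field_simp)

end

section
variable {σ T t x : ℝ}

lemma hasDerivAt_mul_sqrt_sub (ht : t < T) :
    HasDerivAt (fun s => σ * √(T - s)) (-(σ / (2 * √(T - t)))) t := by
  have h := ((Real.hasDerivAt_sqrt (sub_pos.2 ht).ne').comp t
    ((hasDerivAt_id t).const_sub T)).const_mul σ
  exact h.congr_deriv (by ring)

lemma tendsto_mul_sqrt_sub_nhdsLT (hσ : 0 < σ) :
    Tendsto (fun s => σ * √(T - s)) (𝓝[<] T) (𝓝[>] 0) := by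
  refine tendsto_nhdsWithin_iff.2 ⟨?_, ?_⟩
  · have h : Continuous fun s => σ * √(T - s) := by fun_prop
    simpa using (h.tendsto T).mono_left nhdsWithin_le_nhds
  · filter_upwards [self_mem_nhdsWithin] with s hs
    exact mul_pos hσ (Real.sqrt_pos.2 (sub_pos.2 hs))

lemma bubbleProfile_backward_heat (hσ : σ ≠ 0) (hx : x ≠ 0) (ht : t < T) :
    deriv (fun s => bubbleProfile (σ * √(T - s)) x) t
      + 1 / 2 * σ ^ 2 * x ^ 4 * deriv (deriv (bubbleProfile (σ * √(T - t)))) x = 0 := by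
  have hroot : 0 < √(T - t) := Real.sqrt_pos.2 (sub_pos.2 ht)
  have ha : σ * √(T - t) ≠ 0 := mul_ne_zero hσ hroot.ne'
  have h := (hasDerivAt_bubbleProfile_scale hx ha).comp t (hasDerivAt_mul_sqrt_sub (σ := σ) ht)
  rw [← Function.comp_def (fun b => bubbleProfile b x), h.deriv]
  field_simp
  ring

lemma tendsto_bubbleProfile_terminal (hσ : 0 < σ) (hx : 0 < x) :
    Tendsto (fun s => bubbleProfile (σ * √(T - s)) x) (𝓝[<] T) (𝓝 0) :=
  (tendsto_bubbleProfile_scale_zero hx).comp (tendsto_mul_sqrt_sub_nhdsLT hσ)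

end

theorem nonuniqueness_solution_BS_general (σ T : ℝ) (hσ : 0 < σ) :
    (∀ x t : ℝ, 0 < x → 0 < t → t < T →
      0 < 2 * x * stdNormalCDF (-(1 / (x * σ * Real.sqrt (T - t))))) ∧
    (∀ x t : ℝ, 0 < x → 0 < t → t < T →
      (deriv (fun s => 2 * x * stdNormalCDF (-(1 / (x * σ * Real.sqrt (T - s))))) t)
      + (1/2) * σ ^ 2 * x ^ 4 *
        (deriv (deriv (fun y =>
          2 * y * stdNormalCDF (-(1 / (y * σ * Real.sqrt (T - t)))))) x) = 0) ∧
    (∀ x : ℝ, 0 < x →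
      Tendsto (fun t : ℝ => 2 * x * stdNormalCDF (-(1 / (x * σ * Real.sqrt (T - t)))))
        (nhdsWithin T (Set.Iio T)) (nhds 0)) ∧
    (∀ t : ℝ, t < T →
      Tendsto (fun x : ℝ => 2 * x * stdNormalCDF (-(1 / (x * σ * Real.sqrt (T - t)))))
        (nhdsWithin 0 (Set.Ioi 0)) (nhds 0)) := by
  have hv (x t : ℝ) :
      2 * x * stdNormalCDF (-(1 / (x * σ * √(T - t)))) = bubbleProfile (σ * √(T - t)) x := by
    rw [bubbleProfile, mul_assoc x]
  simp only [hv]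
  exact ⟨fun x t hx _ _ => bubbleProfile_pos hx,
    fun x t hx _ ht => bubbleProfile_backward_heat hσ.ne' hx.ne' ht,
    fun x hx => tendsto_bubbleProfile_terminal hσ hx,
    fun t _ => tendsto_bubbleProfile_nhds_zero.mono_left nhdsWithin_le_nhds⟩

/-- `v(x,t) = 2xΦ(−1/(xσ√(T−t)))` is a strictly positive classical solution of
`v_t + σ²x⁴v_{xx}/2 = 0` on `(0,∞)×(0,T)` with zero terminal data as `t → T⁻` and
zero boundary data as `x → 0⁺`; hence uniqueness of solutions of linear growth to
the Black–Scholes equation fails. -/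
theorem nonuniqueness_solution_BS (σ T : ℝ) (hσ : 0 < σ) (hT : 0 < T) :
    (∀ x t : ℝ, 0 < x → 0 < t → t < T →
      0 < 2 * x * stdNormalCDF (-(1 / (x * σ * Real.sqrt (T - t))))) ∧
    (∀ x t : ℝ, 0 < x → 0 < t → t < T →
      (deriv (fun s => 2 * x * stdNormalCDF (-(1 / (x * σ * Real.sqrt (T - s))))) t)
      + (1/2) * σ ^ 2 * x ^ 4 *
        (deriv (deriv (fun y =>
          2 * y * stdNormalCDF (-(1 / (y * σ * Real.sqrt (T - t)))))) x) = 0) ∧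
    (∀ x : ℝ, 0 < x →
      Tendsto (fun t : ℝ => 2 * x * stdNormalCDF (-(1 / (x * σ * Real.sqrt (T - t)))))
        (nhdsWithin T (Set.Iio T)) (nhds 0)) ∧
    (∀ t : ℝ, t < T →
      Tendsto (fun x : ℝ => 2 * x * stdNormalCDF (-(1 / (x * σ * Real.sqrt (T - t)))))
        (nhdsWithin 0 (Set.Ioi 0)) (nhds 0)) :=
  nonuniqueness_solution_BS_general σ T hσ
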